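/- Assume p ∤ s. Let φ be a nontrivial multiplicative character of F_q, φ* its restriction to F_r^*, and B = Σ_{x∈F_q^*, Tr_{q/r}(x+1)=0} φ(x). Then |B| = √q/√r if conj(φ*) is nontrivial, and |B| = √q/r if conj(φ*) is trivial. -/

import Mathlib

open Finset

open AddChar MulChar in
private lemma mulChar_abs_one {F : Type*} [Field F] [Fintype F] (χ : MulChar F ℂ) {a : F}
    (ha : a ≠ 0) : ‖χ a‖ = 1 := by
  classical
  lift a to Fˣ using ha.isUnit
  have h2 := Complex.norm_eq_one_of_mem_rootsOfUnity (MulChar.apply_mem_rootsOfUnity (χ := χ) a)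
  rwa [MulChar.coe_equivToUnitHom] at h2

open AddChar MulChar in
private lemma abs_gaussSum_eq {F : Type*} [Field F] [Fintype F] {χ : MulChar F ℂ} (hχ : χ ≠ 1)
    {ψ : AddChar F ℂ} (hψ : ψ.IsPrimitive) :
    ‖gaussSum χ ψ‖ = Real.sqrt (Fintype.card F) := by
  have hchar : 0 < ringChar F := Nat.pos_of_ne_zero (CharP.ringChar_ne_zero_of_finite F)
  have hconj : (starRingEnd ℂ) (gaussSum χ ψ) = gaussSum χ⁻¹ ψ⁻¹ := by
    simp only [gaussSum, map_sum]
    refine Finset.sum_congr rfl fun a _ => ?_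
    rw [map_mul]
    congr 1
    · rw [← MulChar.star_apply' χ a]; rfl
    · exact AddChar.starComp_apply hchar a
  have key := gaussSum_mul_gaussSum_eq_card hχ hψ
  rw [← hconj, Complex.mul_conj] at key
  have h2 : Complex.normSq (gaussSum χ ψ) = (Fintype.card F : ℝ) := by exact_mod_cast key
  rw [Complex.norm_def, h2]

open AddChar MulChar in
private lemma master {Fr Fq : Type} [Field Fr] [Fintype Fr] [DecidableEq Fr]
    [Field Fq] [Fintype Fq] [DecidableEq Fq] [Algebra Fr Fq]
    (hσ : Algebra.trace Fr Fq 1 ≠ 0) (φ : MulChar Fq ℂ) (hφ : φ ≠ 1) :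
    ((∃ y : Fr, y ≠ 0 ∧ φ (algebraMap Fr Fq y) ≠ 1) →
      ‖∑ x ∈ Finset.univ.filter
        (fun x : Fq => x ≠ 0 ∧ Algebra.trace Fr Fq (x + 1) = 0), φ x‖
        = Real.sqrt (Fintype.card Fq) / Real.sqrt (Fintype.card Fr)) ∧
    ((∀ y : Fr, y ≠ 0 → φ (algebraMap Fr Fq y) = 1) →
      ‖∑ x ∈ Finset.univ.filter
        (fun x : Fq => x ≠ 0 ∧ Algebra.trace Fr Fq (x + 1) = 0), φ x‖
        = Real.sqrt (Fintype.card Fq) / (Fintype.card Fr)) := by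
  classical
  set σ : Fr := Algebra.trace Fr Fq 1 with hσdef
  set B : ℂ := ∑ x ∈ Finset.univ.filter
      (fun x : Fq => x ≠ 0 ∧ Algebra.trace Fr Fq (x + 1) = 0), φ x with hBdef
  have htr2 : ∀ (a : Fr) (u : Fq),
      Algebra.trace Fr Fq (algebraMap Fr Fq a * u) = a * Algebra.trace Fr Fq u := by
    intro a u
    rw [← Algebra.smul_def, map_smul, smul_eq_mul]
  have htr1 : ∀ a : Fr, Algebra.trace Fr Fq (algebraMap Fr Fq a) = a * σ := by
    intro a
    simpa using htr2 a 1
  -- additive characters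
  set ψ₀ : AddChar Fr ℂ := AddChar.FiniteField.primitiveChar_to_Complex Fr with hψ₀def
  have hψ₀prim : ψ₀.IsPrimitive := AddChar.FiniteField.primitiveChar_to_Complex_isPrimitive Fr
  have hψ₀ne : ψ₀ ≠ 1 := by
    simpa [AddChar.mulShift_one] using hψ₀prim (one_ne_zero (α := Fr))
  set ψ : AddChar Fq ℂ :=
    ψ₀.compAddMonoidHom (Algebra.trace Fr Fq).toAddMonoidHom with hψdef
  have hψap : ∀ u : Fq, ψ u = ψ₀ (Algebra.trace Fr Fq u) := fun u => rfl
  have hψne : ψ ≠ 1 := by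
    obtain ⟨b, hb⟩ := AddChar.ne_one_iff.mp hψ₀ne
    refine AddChar.ne_one_iff.mpr ⟨algebraMap Fr Fq (σ⁻¹ * b), ?_⟩
    rw [hψap, htr1]
    have h : σ⁻¹ * b * σ = b := by field_simp
    rwa [h]
  have hψprim : ψ.IsPrimitive := AddChar.IsPrimitive.of_ne_one hψne
  -- the restricted character
  set χ : MulChar Fr ℂ :=
    MulChar.ofUnitHom ((MulChar.toUnitHom φ).comp (Units.map (algebraMap Fr Fq).toMonoidHom))
    with hχdef
  have hχap : ∀ {a : Fr}, a ≠ 0 → χ a = φ (algebraMap Fr Fq a) := by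
    intro a ha
    lift a to Frˣ using ha.isUnit
    rw [hχdef, MulChar.ofUnitHom_coe]
    simp [MulChar.coe_toUnitHom]
  have hχinv : ∀ {a : Fr}, a ≠ 0 → χ⁻¹ a = (φ (algebraMap Fr Fq a))⁻¹ := by
    intro a ha
    rw [MulChar.inv_apply' χ a, hχap (inv_ne_zero ha), map_inv₀,
      ← MulChar.inv_apply' φ, MulChar.inv_apply_eq_inv']
  have hφ0 : φ (0 : Fq) = 0 := MulChar.map_zero φ
  -- the key identity
  have e1 : (Fintype.card Fr : ℂ) * B =
      ∑ x : Fq, φ x * ∑ a : Fr, ψ₀ (a * Algebra.trace Fr Fq (x + 1)) := by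
    have h : ∀ x : Fq, (∑ a : Fr, ψ₀ (a * Algebra.trace Fr Fq (x + 1))) =
        if Algebra.trace Fr Fq (x + 1) = 0 then (Fintype.card Fr : ℂ) else 0 := by
      intro x
      rw [AddChar.sum_mulShift _ hψ₀prim]
      split_ifs <;> simp
    simp_rw [h]
    rw [hBdef, Finset.mul_sum, Finset.sum_filter]
    refine Finset.sum_congr rfl fun x _ => ?_
    by_cases hx : x = 0
    · subst hx
      simp [hφ0]
    · by_cases htx : Algebra.trace Fr Fq (x + 1) = 0 <;> simp [hx, htx, mul_comm]
  have e2 : ∑ x : Fq, φ x * ∑ a : Fr, ψ₀ (a * Algebra.trace Fr Fq (x + 1)) =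
      ∑ a : Fr, ψ (algebraMap Fr Fq a) *
        gaussSum φ (AddChar.mulShift ψ (algebraMap Fr Fq a)) := by
    simp_rw [Finset.mul_sum]
    rw [Finset.sum_comm]
    refine Finset.sum_congr rfl fun a _ => ?_
    simp only [gaussSum]
    rw [Finset.mul_sum]
    refine Finset.sum_congr rfl fun x _ => ?_
    rw [← htr2 a (x + 1), ← hψap (algebraMap Fr Fq a * (x + 1)),
      mul_add (algebraMap Fr Fq a) x 1, mul_one, AddChar.map_add_eq_mul,
      AddChar.mulShift_apply]
    ring
  have e3 : ∑ a : Fr, ψ (algebraMap Fr Fq a) *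
        gaussSum φ (AddChar.mulShift ψ (algebraMap Fr Fq a)) =
      gaussSum φ ψ * gaussSum χ⁻¹ (AddChar.mulShift ψ₀ σ) := by
    have hSdef : gaussSum χ⁻¹ (AddChar.mulShift ψ₀ σ) = ∑ a : Fr, χ⁻¹ a * ψ₀ (σ * a) := rfl
    rw [hSdef, Finset.mul_sum]
    refine Finset.sum_congr rfl fun a _ => ?_
    by_cases ha : a = 0
    · subst ha
      have h1 : gaussSum φ (AddChar.mulShift ψ (algebraMap Fr Fq 0)) = 0 := by
        simp only [gaussSum, map_zero, AddChar.mulShift_apply, zero_mul,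
          AddChar.map_zero_eq_one, mul_one]
        exact MulChar.sum_eq_zero_of_ne_one hφ
      have h2 : χ⁻¹ (0 : Fr) = 0 := by
        rw [MulChar.inv_apply' χ 0, inv_zero, MulChar.map_zero]
      rw [h1, mul_zero, h2, zero_mul, mul_zero]
    · have haq : algebraMap Fr Fq a ≠ 0 := (map_ne_zero (algebraMap Fr Fq)).mpr ha
      have hne : φ (algebraMap Fr Fq a) ≠ 0 := by
        intro h
        have h' := mulChar_abs_one φ haq
        rw [h] at h'
        simp at h'
      have hmul := gaussSum_mulShift φ ψ (Units.mk0 (algebraMap Fr Fq a) haq)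
      have hval : ((Units.mk0 (algebraMap Fr Fq a) haq : Fqˣ) : Fq) = algebraMap Fr Fq a := rfl
      rw [hval] at hmul
      have hg : gaussSum φ (AddChar.mulShift ψ (algebraMap Fr Fq a)) =
          (φ (algebraMap Fr Fq a))⁻¹ * gaussSum φ ψ := by
        rw [← hmul, ← mul_assoc, inv_mul_cancel₀ hne, one_mul]
      rw [hg, hψap, htr1, hχinv ha, mul_comm a σ]
      ring
  have key : (Fintype.card Fr : ℂ) * B =
      gaussSum φ ψ * gaussSum χ⁻¹ (AddChar.mulShift ψ₀ σ) := by
    rw [e1, e2, e3]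
  have habs : (Fintype.card Fr : ℝ) * ‖B‖ =
      Real.sqrt (Fintype.card Fq) * ‖gaussSum χ⁻¹ (AddChar.mulShift ψ₀ σ)‖ := by
    have h := congrArg norm key
    rwa [norm_mul, norm_mul, Complex.norm_natCast, abs_gaussSum_eq hφ hψprim] at h
  have hrpos : (0 : ℝ) < Fintype.card Fr := by
    have : 0 < Fintype.card Fr := Fintype.card_pos
    exact_mod_cast this
  constructor
  · rintro ⟨y, hy0, hy1⟩
    have hχne : χ⁻¹ ≠ 1 := by
      rw [Ne, inv_eq_one]
      intro h
      apply hy1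
      rw [← hχap hy0, h]
      have h1 := MulChar.one_apply_coe (R := Fr) (R' := ℂ) hy0.isUnit.unit
      rwa [IsUnit.unit_spec] at h1
    have hmul := gaussSum_mulShift χ⁻¹ ψ₀ (Units.mk0 σ hσ)
    have habs2 := congrArg norm hmul
    rw [norm_mul, mulChar_abs_one χ⁻¹ (show ((Units.mk0 σ hσ : Frˣ) : Fr) ≠ 0 from hσ), one_mul,
      abs_gaussSum_eq hχne hψ₀prim] at habs2
    have hval : ((Units.mk0 σ hσ : Frˣ) : Fr) = σ := rfl
    rw [hval] at habs2
    rw [habs2] at habs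
    have hrs : (0 : ℝ) < Real.sqrt (Fintype.card Fr) := Real.sqrt_pos.mpr hrpos
    have hr2 : Real.sqrt (Fintype.card Fr) * Real.sqrt (Fintype.card Fr)
        = (Fintype.card Fr : ℝ) := Real.mul_self_sqrt hrpos.le
    rw [eq_div_iff hrs.ne']
    refine mul_right_cancel₀ hrs.ne' ?_
    rw [mul_assoc, hr2]
    linarith [habs]
  · intro hy
    have hχ1 : ∀ {a : Fr}, a ≠ 0 → χ⁻¹ a = 1 := by
      intro a ha
      rw [hχinv ha, hy a ha, inv_one]
    have hsum0 : ∑ a : Fr, ψ₀ (σ * a) = 0 := by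
      have h := AddChar.sum_mulShift (b := σ) hψ₀prim
      rw [if_neg hσ] at h
      simp_rw [mul_comm σ]
      exact_mod_cast h
    have hSval : gaussSum χ⁻¹ (AddChar.mulShift ψ₀ σ) = -1 := by
      simp only [gaussSum, AddChar.mulShift_apply]
      have h : ∀ a : Fr, χ⁻¹ a * ψ₀ (σ * a) = ψ₀ (σ * a) - (if a = 0 then 1 else 0) := by
        intro a
        by_cases ha : a = 0
        · subst ha
          rw [MulChar.inv_apply' χ 0, inv_zero, MulChar.map_zero, zero_mul]
          simp
        · rw [hχ1 ha, one_mul, if_neg ha, sub_zero]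
      simp_rw [h]
      rw [Finset.sum_sub_distrib, hsum0]
      simp
    rw [hSval] at habs
    rw [eq_div_iff hrpos.ne']
    have : ‖(-1 : ℂ)‖ = 1 := by simp
    rw [this, mul_one] at habs
    linarith [habs]

/-- Assume `p ∤ s`.  Let `φ` be a nontrivial multiplicative character of
`F_q`, `φ*` its restriction to `F_r^*`, and
`B = Σ_{x∈F_q^*, Tr_{q/r}(x+1)=0} φ(x)`.  Then `|B| = √q/√r` if `conj(φ*)` is
nontrivial, and `|B| = √q/r` if `conj(φ*)` is trivial. -/
theorem stmt6 (p t s : ℕ) [Fact p.Prime] (hp2 : Odd p) (ht : 0 < t) (hs : 0 < s)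
    (hps : ¬ p ∣ s)
    (Fr Fq : Type) [Field Fr] [Fintype Fr] [DecidableEq Fr]
    [Field Fq] [Fintype Fq] [DecidableEq Fq] [Algebra Fr Fq]
    (hr : Fintype.card Fr = p ^ t) (hq : Fintype.card Fq = (p ^ t) ^ s)
    (φ : MulChar Fq ℂ) (hφ : φ ≠ 1)
    (B : ℂ)
    (hB : B = ∑ x ∈ Finset.univ.filter
      (fun x : Fq => x ≠ 0 ∧ Algebra.trace Fr Fq (x + 1) = 0), φ x) :
    ((∃ y : Fr, y ≠ 0 ∧ (starRingEnd ℂ) (φ (algebraMap Fr Fq y)) ≠ 1) →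
      ‖B‖ = Real.sqrt (((p : ℝ) ^ t) ^ s) / Real.sqrt ((p : ℝ) ^ t)) ∧
    ((∀ y : Fr, y ≠ 0 → (starRingEnd ℂ) (φ (algebraMap Fr Fq y)) = 1) →
      ‖B‖ = Real.sqrt (((p : ℝ) ^ t) ^ s) / ((p : ℝ) ^ t)) := by
  classical
  have hp : p.Prime := Fact.out
  have hring : ringChar Fr = p := by
    obtain ⟨n, hprime, hcard⟩ := FiniteField.card Fr (ringChar Fr)
    have hdvd : ringChar Fr ∣ p ^ t := by
      rw [← hr, hcard]
      exact dvd_pow_self _ n.2.ne'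
    exact (Nat.prime_dvd_prime_iff_eq hprime hp).mp (hprime.dvd_of_dvd_pow hdvd)
  haveI hchp : CharP Fr p := hring ▸ ringChar.charP Fr
  have hsne : (s : Fr) ≠ 0 := fun h => hps ((CharP.cast_eq_zero_iff Fr p s).mp h)
  have hfin : Module.finrank Fr Fq = s := by
    have h1 : Fintype.card Fr ^ Module.finrank Fr Fq = Fintype.card Fr ^ s := by
      rw [← Module.card_eq_pow_finrank (K := Fr) (V := Fq), hq, hr]
    exact Nat.pow_right_injective Fintype.one_lt_card h1
  have hσ : Algebra.trace Fr Fq 1 ≠ 0 := by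
    rw [show (1 : Fq) = algebraMap Fr Fq 1 from (map_one _).symm, Algebra.trace_algebraMap, hfin]
    simpa using hsne
  have hconj : ∀ z : ℂ, (starRingEnd ℂ) z = 1 ↔ z = 1 := fun z =>
    ⟨fun h => by simpa using congrArg (starRingEnd ℂ) h, fun h => by rw [h, map_one]⟩
  obtain ⟨m1, m2⟩ := master hσ φ hφ
  have hcq : (Fintype.card Fq : ℝ) = ((p : ℝ) ^ t) ^ s := by rw [hq]; push_cast; ring
  have hcr : (Fintype.card Fr : ℝ) = (p : ℝ) ^ t := by rw [hr]; push_cast; ring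
  constructor
  · rintro ⟨y, hy0, hy1⟩
    rw [hB, ← hcq, ← hcr]
    exact m1 ⟨y, hy0, fun h => hy1 ((hconj _).mpr h)⟩
  · intro h
    rw [hB, ← hcq, ← hcr]
    exact m2 fun y hy => (hconj _).mp (h y hy)
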